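/- Let H ∈ (0,1), α ∈ (0, π/2], β ∈ ℝ and x ∈ ℝ². Then ∫_{C(β,α)} (1 − cos(x·ξ)) ‖ξ‖^{−2H−2} dξ = γ(H) · ∫_{β−α}^{β+α} |x·u(θ)|^{2H} dθ, where C(β,α) is the symmetric double cone of directions within angle α of β. (This is the polar-coordinate variogram formula v_{Y}(x) = γ(H) ∫ 1_{[−α,α]}(θ−β) |x·u(θ)|^{2H} dθ for the elementary field.) -/

import Mathlib

/-!
In polar coordinates `ξ = r • u θ` the cone becomes the set of angles within `α` of `β` modulo `π`,
and the radial integral `∫₀^∞ (1 - cos (t r)) r^(-a-1) dr` equals `|t| ^ a` times its value at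
`t = 1`. That value is `π / (2 sin (π a / 2) Γ(a + 1))`: writing
`Γ(a + 1) r^(-a-1) = ∫₀^∞ s^a e^(-r s) ds` and swapping the integrals, the Laplace transform
`∫₀^∞ (1 - cos r) e^(-s r) dr = 1 / (s (1 + s²))` reduces it to `∫₀^∞ s^(a-1) / (1 + s²) ds`, which
is half the beta integral `B(a/2, 1 - a/2)` after substituting `t = s² / (1 + s²)`. The angular
integrand is `π`-periodic, so its integral over `(-π, π)` is twice the integral over the window
`[β - π/2, β + π/2]`, on which the cone's angles are exactly `[β - α, β + α]`.

All integrands are nonnegative, so the computation is done with lower Lebesgue integrals and no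
integrability needs to be checked along the way.
-/

open MeasureTheory Real Set RealInnerProductSpace

noncomputable section

/-- The angle (argument) of a vector of `ℝ²`. -/
def arg2 (ξ : EuclideanSpace ℝ (Fin 2)) : ℝ :=
  Complex.arg ((ξ 0 : ℂ) + (ξ 1 : ℂ) * Complex.I)

/-- The symmetric double cone of directions within angle `α` of `β`. -/
def doubleCone (β α : ℝ) : Set (EuclideanSpace ℝ (Fin 2)) :=
  {ξ | ξ ≠ 0 ∧ ∃ k : ℤ, |arg2 ξ - β - k * π| ≤ α}

/-- The unit vector of angle `θ`. -/
def u (θ : ℝ) : EuclideanSpace ℝ (Fin 2) :=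
  WithLp.toLp 2 ![Real.cos θ, Real.sin θ]

/-- The normalizing constant `γ(H)`. -/
def gammaH (H : ℝ) : ℝ := π / (2 * H * Real.Gamma (2 * H) * Real.sin (H * π))

open scoped ENNReal

lemma cos_mul_exp_neg_mul_eq_re (s r : ℝ) :
    cos r * exp (-(s * r)) = (Complex.exp ((-s + Complex.I) * r)).re := by
  simp [Complex.exp_re, mul_comm]

lemma integrableOn_cos_mul_exp_neg_mul {s : ℝ} (hs : 0 < s) :
    IntegrableOn (fun r => cos r * exp (-(s * r))) (Ioi 0) := by
  simp_rw [cos_mul_exp_neg_mul_eq_re]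
  exact (integrableOn_exp_mul_complex_Ioi (by simpa) 0).re

lemma integral_cos_mul_exp_neg_mul {s : ℝ} (hs : 0 < s) :
    ∫ r in Ioi 0, cos r * exp (-(s * r)) = s / (1 + s ^ 2) := by
  have hre : (-(s : ℂ) + Complex.I).re < 0 := by simpa
  have h := integral_re (𝕜 := ℂ) (integrableOn_exp_mul_complex_Ioi hre 0)
  simp only [RCLike.re_to_complex] at h
  simp_rw [cos_mul_exp_neg_mul_eq_re, h, integral_exp_mul_complex_Ioi hre 0]
  simp [Complex.div_re, Complex.normSq_apply, ← sq, add_comm]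

lemma lintegral_one_sub_cos_mul_exp_neg_mul {s : ℝ} (hs : 0 < s) :
    ∫⁻ r in Ioi 0, ENNReal.ofReal ((1 - cos r) * exp (-(s * r))) =
      ENNReal.ofReal (1 / (s * (1 + s ^ 2))) := by
  have hexp : IntegrableOn (fun r => exp (-(s * r))) (Ioi 0) := by
    simpa only [neg_mul] using integrableOn_exp_mul_Ioi (neg_neg_of_pos hs) 0
  have hexp_eq : ∫ r in Ioi 0, exp (-(s * r)) = 1 / s := by
    simpa [neg_mul] using integral_exp_mul_Ioi (neg_neg_of_pos hs) 0
  have hcos := integrableOn_cos_mul_exp_neg_mul hs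
  simp_rw [sub_mul, one_mul]
  rw [← ofReal_integral_eq_lintegral_ofReal
      (f := fun r => exp (-(s * r)) - cos r * exp (-(s * r))) (hexp.sub hcos),
    integral_sub hexp hcos, hexp_eq, integral_cos_mul_exp_neg_mul hs]
  · congr 1
    field_simp
    ring
  · refine ae_of_all _ fun r => ?_
    have := cos_le_one r
    have := exp_pos (-(s * r))
    simp only [Pi.zero_apply]
    nlinarith

lemma lintegral_rpow_mul_exp_neg_mul {a r : ℝ} (ha : -1 < a) (hr : 0 < r) :
    ∫⁻ s in Ioi 0, ENNReal.ofReal (s ^ a * exp (-(r * s))) =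
      ENNReal.ofReal (Gamma (a + 1) * r ^ (-a - 1)) := by
  have hint : IntegrableOn (fun s => s ^ a * exp (-(r * s))) (Ioi 0) := by
    simpa only [rpow_one, neg_mul] using integrableOn_rpow_mul_exp_neg_mul_rpow ha one_pos hr
  have h := integral_rpow_mul_exp_neg_mul_Ioi (a := a + 1) (by linarith) hr
  rw [add_sub_cancel_right, one_div, inv_rpow hr.le, ← rpow_neg hr.le, neg_add', mul_comm] at h
  rw [← h, ofReal_integral_eq_lintegral_ofReal hint]
  filter_upwards [ae_restrict_mem measurableSet_Ioi] with s (hs : 0 < s)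
  positivity

lemma lintegral_rpow_mul_one_sub_rpow_neg {b : ℝ} (hb0 : 0 < b) (hb1 : b < 1) :
    ∫⁻ t in Ioo 0 1, ENNReal.ofReal (t ^ (b - 1) * (1 - t) ^ (-b)) =
      ENNReal.ofReal (π / sin (π * b)) := by
  have hB : ProbabilityTheory.beta b (1 - b) = π / sin (π * b) := by
    rw [ProbabilityTheory.beta, add_sub_cancel, Gamma_one, div_one, Gamma_mul_Gamma_one_sub]
  have hB0 : 0 < ProbabilityTheory.beta b (1 - b) := ProbabilityTheory.beta_pos hb0 (by linarith)
  have h := ProbabilityTheory.lintegral_betaPDF_eq_one hb0 (sub_pos.2 hb1)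
  rw [ProbabilityTheory.lintegral_betaPDF] at h
  simp_rw [mul_assoc, ENNReal.ofReal_mul (one_div_pos.2 hB0).le] at h
  rw [lintegral_const_mul' _ _ ENNReal.ofReal_ne_top, sub_sub_cancel_left, mul_comm] at h
  rw [← hB, ENNReal.eq_inv_of_mul_eq_one_left h, ← ENNReal.ofReal_inv_of_pos (by positivity),
    one_div, inv_inv]

lemma image_one_sub_inv_one_add_sq_Ioi :
    (fun s : ℝ => 1 - (1 + s ^ 2)⁻¹) '' Ioi 0 = Ioo 0 1 := by
  ext t
  constructor
  · rintro ⟨s, hs, rfl⟩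
    have hs : 0 < s := hs
    constructor
    · have : (1 + s ^ 2)⁻¹ < 1 := inv_lt_one_of_one_lt₀ (by nlinarith)
      linarith
    · have : 0 < (1 + s ^ 2)⁻¹ := by positivity
      linarith
  · rintro ⟨ht0, ht1⟩
    refine ⟨sqrt (t / (1 - t)), sqrt_pos.2 (div_pos ht0 (by linarith)), ?_⟩
    have h1t : 1 - t ≠ 0 := by linarith
    change 1 - (1 + sqrt (t / (1 - t)) ^ 2)⁻¹ = t
    rw [sq_sqrt (div_pos ht0 (by linarith)).le]
    field_simp
    ring

lemma strictMonoOn_one_sub_inv_one_add_sq :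
    StrictMonoOn (fun s : ℝ => 1 - (1 + s ^ 2)⁻¹) (Ioi 0) := by
  intro s (hs : 0 < s) t _ hst
  have : (1 + t ^ 2)⁻¹ < (1 + s ^ 2)⁻¹ := inv_strictAnti₀ (by positivity) (by nlinarith)
  simp only
  linarith

lemma hasDerivAt_one_sub_inv_one_add_sq (s : ℝ) :
    HasDerivAt (fun s : ℝ => 1 - (1 + s ^ 2)⁻¹) (2 * s / (1 + s ^ 2) ^ 2) s := by
  refine ((((hasDerivAt_pow 2 s).const_add 1).inv (by positivity)).const_sub 1).congr_deriv ?_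
  ring

lemma lintegral_rpow_div_one_add_sq {a : ℝ} (ha0 : 0 < a) (ha2 : a < 2) :
    ∫⁻ s in Ioi 0, ENNReal.ofReal (s ^ (a - 1) / (1 + s ^ 2)) =
      ENNReal.ofReal (π / (2 * sin (π * a / 2))) := by
  have h := lintegral_image_eq_lintegral_abs_deriv_mul measurableSet_Ioi
    (fun s _ => (hasDerivAt_one_sub_inv_one_add_sq s).hasDerivWithinAt)
    strictMonoOn_one_sub_inv_one_add_sq.injOn
    (fun t => ENNReal.ofReal (t ^ (a / 2 - 1) * (1 - t) ^ (-(a / 2))))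
  rw [image_one_sub_inv_one_add_sq_Ioi,
    lintegral_rpow_mul_one_sub_rpow_neg (by linarith) (by linarith)] at h
  have hpt : ∀ s ∈ Ioi (0 : ℝ), ENNReal.ofReal |2 * s / (1 + s ^ 2) ^ 2| *
      ENNReal.ofReal ((1 - (1 + s ^ 2)⁻¹) ^ (a / 2 - 1) * (1 - (1 - (1 + s ^ 2)⁻¹)) ^ (-(a / 2))) =
      2 * ENNReal.ofReal (s ^ (a - 1) / (1 + s ^ 2)) := by
    intro s (hs : 0 < s)
    set q := 1 + s ^ 2
    have hq : 0 < q := by positivity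
    have hsq : (s ^ 2) ^ (a / 2 - 1) = s ^ (a - 1) / s := by
      rw [← rpow_natCast, ← rpow_mul hs.le, ← rpow_sub_one hs.ne']
      congr 1
      push_cast
      ring
    have hq' : 1 - q⁻¹ = s ^ 2 / q := by field_simp; ring
    rw [abs_of_pos (by positivity), ← ENNReal.ofReal_mul (by positivity), ← ENNReal.ofReal_ofNat,
      ← ENNReal.ofReal_mul zero_le_two, sub_sub_cancel, hq', div_rpow (sq_nonneg s) hq.le,
      inv_rpow hq.le, rpow_neg hq.le, inv_inv, hsq]
    congr 1
    field_simp
    rw [mul_comm, ← rpow_add_one hq.ne']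
    ring_nf
  rw [setLIntegral_congr_fun measurableSet_Ioi hpt, lintegral_const_mul' _ _ (by simp)] at h
  rw [show π / (2 * sin (π * a / 2)) = π / sin (π * (a / 2)) / 2 by ring_nf,
    ENNReal.ofReal_div_of_pos two_pos, h, ENNReal.ofReal_ofNat, mul_comm,
    ENNReal.mul_div_cancel_right two_ne_zero ENNReal.ofNat_ne_top]

def radialConst (a : ℝ) : ℝ := π / (2 * sin (π * a / 2) * Gamma (a + 1))

lemma lintegral_one_sub_cos_mul_rpow {a : ℝ} (ha0 : 0 < a) (ha2 : a < 2) :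
    ∫⁻ r in Ioi 0, ENNReal.ofReal ((1 - cos r) * r ^ (-a - 1)) =
      ENNReal.ofReal (radialConst a) := by
  set F : ℝ → ℝ → ℝ≥0∞ := fun r s => ENNReal.ofReal ((1 - cos r) * (s ^ a * exp (-(r * s))))
  have hΓ : 0 < Gamma (a + 1) := Gamma_pos_of_pos (by linarith)
  have hr_side : ∀ r ∈ Ioi (0 : ℝ), ∫⁻ s in Ioi 0, F r s =
      ENNReal.ofReal (Gamma (a + 1)) * ENNReal.ofReal ((1 - cos r) * r ^ (-a - 1)) := by
    intro r (hr : 0 < r)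
    have hcos : 0 ≤ 1 - cos r := sub_nonneg.2 (cos_le_one r)
    simp_rw [F, ENNReal.ofReal_mul hcos, lintegral_const_mul' _ _ ENNReal.ofReal_ne_top,
      lintegral_rpow_mul_exp_neg_mul (a := a) (by linarith) hr, ENNReal.ofReal_mul hΓ.le]
    ring
  have hs_side : ∀ s ∈ Ioi (0 : ℝ), ∫⁻ r in Ioi 0, F r s =
      ENNReal.ofReal (s ^ (a - 1) / (1 + s ^ 2)) := by
    intro s (hs : 0 < s)
    have hF : ∀ r, F r s = ENNReal.ofReal (s ^ a) *
        ENNReal.ofReal ((1 - cos r) * exp (-(s * r))) := fun r => by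
      rw [← ENNReal.ofReal_mul (by positivity), mul_comm s r, mul_left_comm]
    simp_rw [hF, lintegral_const_mul' _ _ ENNReal.ofReal_ne_top,
      lintegral_one_sub_cos_mul_exp_neg_mul hs, ← ENNReal.ofReal_mul (by positivity : 0 ≤ s ^ a),
      rpow_sub_one hs.ne']
    field_simp
  have hF : Measurable (Function.uncurry F) := ENNReal.measurable_ofReal.comp (by fun_prop)
  have h := lintegral_lintegral_swap hF.aemeasurable (μ := volume.restrict (Ioi 0))
    (ν := volume.restrict (Ioi 0))
  rw [setLIntegral_congr_fun measurableSet_Ioi hr_side,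
    setLIntegral_congr_fun measurableSet_Ioi hs_side,
    lintegral_const_mul' _ _ ENNReal.ofReal_ne_top,
    lintegral_rpow_div_one_add_sq ha0 ha2,
    ← ENNReal.eq_div_iff (by simpa using hΓ) ENNReal.ofReal_ne_top] at h
  rw [h, ← ENNReal.ofReal_div_of_pos hΓ, div_div, radialConst]

lemma lintegral_one_sub_cos_mul_mul_rpow {a : ℝ} (ha0 : 0 < a) (ha2 : a < 2) (t : ℝ) :
    ∫⁻ r in Ioi 0, ENNReal.ofReal ((1 - cos (t * r)) * r ^ (-a - 1)) =
      ENNReal.ofReal (radialConst a * |t| ^ a) := by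
  rcases eq_or_ne t 0 with rfl | ht
  · simp [zero_rpow ha0.ne']
  have hT : 0 < |t| := abs_pos.2 ht
  have hcos : ∀ y, cos (t * (|t|⁻¹ * y)) = cos y := fun y => by
    rcases abs_cases t with ⟨h, -⟩ | ⟨h, -⟩ <;> simp [h, ht]
  have h := lintegral_image_eq_lintegral_abs_deriv_mul (measurableSet_Ioi (a := 0))
    (fun y _ => ((hasDerivAt_id' y).const_mul |t|⁻¹).hasDerivWithinAt)
    (mul_right_injective₀ (inv_ne_zero hT.ne')).injOn
    (fun r => ENNReal.ofReal ((1 - cos (t * r)) * r ^ (-a - 1)))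
  rw [image_mul_left_Ioi (inv_pos.2 hT), mul_zero] at h
  rw [h, ENNReal.ofReal_mul' (by positivity), ← lintegral_one_sub_cos_mul_rpow ha0 ha2,
    ← lintegral_mul_const' _ _ ENNReal.ofReal_ne_top]
  refine setLIntegral_congr_fun measurableSet_Ioi fun y (hy : 0 < y) => ?_
  rw [← ENNReal.ofReal_mul (by positivity), ← ENNReal.ofReal_mul' (by positivity), hcos, mul_one,
    abs_of_pos (inv_pos.2 hT), mul_rpow (inv_pos.2 hT).le hy.le, inv_rpow hT.le, ← rpow_neg hT.le,
    show -(-a - 1) = a + 1 by ring, rpow_add_one hT.ne']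
  congr 1
  field_simp

lemma two_mul_radialConst_two_mul {H : ℝ} (hH : H ≠ 0) : 2 * radialConst (2 * H) = gammaH H := by
  rw [radialConst, gammaH, Gamma_add_one (mul_ne_zero two_ne_zero hH),
    show π * (2 * H) / 2 = H * π by ring]
  ring

lemma radialConst_nonneg {a : ℝ} (ha0 : 0 < a) (ha2 : a < 2) : 0 ≤ radialConst a := by
  have : 0 < sin (π * a / 2) :=
    sin_pos_of_pos_of_lt_pi (by positivity) (by nlinarith [pi_pos])
  have : 0 < Gamma (a + 1) := Gamma_pos_of_pos (by linarith)
  unfold radialConst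
  positivity

lemma inner_u (x : EuclideanSpace ℝ (Fin 2)) (θ : ℝ) : ⟪x, u θ⟫ = x 0 * cos θ + x 1 * sin θ := by
  simp [u, PiLp.inner_apply, Fin.sum_univ_two, mul_comm]

lemma norm_u (θ : ℝ) : ‖u θ‖ = 1 := by
  simp [u, EuclideanSpace.norm_eq, Fin.sum_univ_two]

lemma continuous_u : Continuous u := by
  unfold u
  fun_prop

lemma u_add_pi (θ : ℝ) : u (θ + π) = -u θ := by
  ext i
  fin_cases i <;> simp [u, cos_add_pi, sin_add_pi]

lemma arg2_smul_u {r θ : ℝ} (hr : 0 < r) (hθ : θ ∈ Ioc (-π) π) : arg2 (r • u θ) = θ := by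
  have h : (r : ℂ) * Complex.cos θ + r * Complex.sin θ * Complex.I =
      r * (Complex.cos θ + Complex.sin θ * Complex.I) := by
    ring
  simpa [arg2, u, h] using Complex.arg_mul_cos_add_sin_mul_I hr hθ

lemma lintegral_comp_smul_u (f : EuclideanSpace ℝ (Fin 2) → ℝ≥0∞) :
    ∫⁻ p in polarCoord.target, ENNReal.ofReal p.1 * f (p.1 • u p.2) = ∫⁻ ξ, f ξ := by
  let e := (MeasurableEquiv.toLp 2 (Fin 2 → ℝ)).symm.trans MeasurableEquiv.finTwoArrow
  have he : MeasurePreserving e :=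
    (EuclideanSpace.volume_preserving_symm_measurableEquiv_toLp (Fin 2)).trans
      (volume_preserving_finTwoArrow ℝ)
  have hpolar : ∀ p : ℝ × ℝ, e.symm (polarCoord.symm p) = p.1 • u p.2 := fun p => by
    ext i
    fin_cases i <;> simp [e, u, polarCoord]
  rw [← (he.symm e).lintegral_comp_emb e.symm.measurableEmbedding,
    ← lintegral_comp_polarCoord_symm]
  simp_rw [hpolar, smul_eq_mul]

def doubleConeAngles (β α : ℝ) : Set ℝ := {θ | ∃ k : ℤ, |θ - β - k * π| ≤ α}

lemma measurableSet_doubleConeAngles (β α : ℝ) : MeasurableSet (doubleConeAngles β α) := by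
  simp only [doubleConeAngles, ofPred_exists]
  exact .iUnion fun k => (isClosed_le (by fun_prop) continuous_const).measurableSet

lemma measurableSet_doubleCone (β α : ℝ) : MeasurableSet (doubleCone β α) :=
  (measurableSet_singleton 0).compl.inter ((measurableSet_doubleConeAngles β α).preimage
    (Complex.measurable_arg.comp (by fun_prop)))

lemma smul_u_mem_doubleCone_iff {β α r θ : ℝ} (hr : 0 < r) (hθ : θ ∈ Ioc (-π) π) :
    r • u θ ∈ doubleCone β α ↔ θ ∈ doubleConeAngles β α := by
  have hne : r • u θ ≠ 0 := smul_ne_zero hr.ne' (norm_ne_zero_iff.1 (by simp [norm_u]))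
  simp [doubleCone, doubleConeAngles, arg2_smul_u hr hθ, hne]

lemma setLIntegral_doubleCone (β α : ℝ) {f : EuclideanSpace ℝ (Fin 2) → ℝ≥0∞}
    (hf : Measurable f) :
    ∫⁻ ξ in doubleCone β α, f ξ = ∫⁻ θ in Ioo (-π) π, (doubleConeAngles β α).indicator
      (fun θ => ∫⁻ r in Ioi 0, ENNReal.ofReal r * f (r • u θ)) θ := by
  have hmeas : Measurable fun p : ℝ × ℝ =>
      ENNReal.ofReal p.1 * (doubleCone β α).indicator f (p.1 • u p.2) :=
    ENNReal.measurable_ofReal.comp measurable_fst |>.mul <|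
      (hf.indicator (measurableSet_doubleCone β α)).comp
        (measurable_fst.smul (continuous_u.measurable.comp measurable_snd))
  rw [← lintegral_indicator (measurableSet_doubleCone β α), ← lintegral_comp_smul_u,
    polarCoord_target, Measure.volume_eq_prod, ← Measure.prod_restrict,
    lintegral_prod_symm _ hmeas.aemeasurable]
  refine setLIntegral_congr_fun measurableSet_Ioo fun θ hθ => ?_
  by_cases hθS : θ ∈ doubleConeAngles β α
  · rw [indicator_of_mem hθS]
    refine setLIntegral_congr_fun measurableSet_Ioi fun r (hr : 0 < r) => ?_
    rw [indicator_of_mem ((smul_u_mem_doubleCone_iff hr (Ioo_subset_Ioc_self hθ)).2 hθS)]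
  · rw [indicator_of_notMem hθS]
    refine setLIntegral_eq_zero measurableSet_Ioi fun r (hr : 0 < r) => ?_
    rw [indicator_of_notMem (mt (smul_u_mem_doubleCone_iff hr (Ioo_subset_Ioc_self hθ)).1 hθS),
      mul_zero, Pi.zero_apply]

lemma add_pi_mem_doubleConeAngles_iff {β α θ : ℝ} :
    θ + π ∈ doubleConeAngles β α ↔ θ ∈ doubleConeAngles β α := by
  constructor
  · rintro ⟨k, hk⟩
    exact ⟨k - 1, by push_cast; ring_nf at hk ⊢; exact hk⟩
  · rintro ⟨k, hk⟩
    exact ⟨k + 1, by push_cast; ring_nf at hk ⊢; exact hk⟩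

lemma mem_doubleConeAngles_iff_of_abs_le {β α θ : ℝ} (hθ : |θ - β| ≤ π / 2) :
    θ ∈ doubleConeAngles β α ↔ |θ - β| ≤ α := by
  refine ⟨fun ⟨k, hk⟩ => ?_, fun h => ⟨0, by simpa using h⟩⟩
  rcases eq_or_ne k 0 with rfl | hk0
  · simpa using hk
  have h1 : (1 : ℝ) ≤ |(k : ℝ)| := by exact_mod_cast Int.one_le_abs hk0
  have h2 : π ≤ |k * π| := by rw [abs_mul, abs_of_pos pi_pos]; nlinarith [pi_pos]
  have h3 := abs_sub_abs_le_abs_sub (k * π) (θ - β)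
  rw [abs_sub_comm (k * π)] at h3
  linarith

lemma setIntegral_indicator_doubleConeAngles_window {β α : ℝ} (hα : α ≤ π / 2) (f : ℝ → ℝ) :
    ∫ θ in Ioc (β - π / 2) (β + π / 2), (doubleConeAngles β α).indicator f θ =
      ∫ θ in Ioc (β - α) (β + α), f θ :=
  calc ∫ θ in Ioc (β - π / 2) (β + π / 2), (doubleConeAngles β α).indicator f θ
      = ∫ θ in Ioc (β - π / 2) (β + π / 2), (Icc (β - α) (β + α)).indicator f θ := by
        refine setIntegral_congr_fun measurableSet_Ioc fun θ hθ => ?_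
        have hiff : θ ∈ doubleConeAngles β α ↔ θ ∈ Icc (β - α) (β + α) := by
          rw [mem_doubleConeAngles_iff_of_abs_le
            (abs_le.2 ⟨by linarith [hθ.1], by linarith [hθ.2]⟩), abs_le, mem_Icc]
          constructor <;> rintro ⟨h1, h2⟩ <;> constructor <;> linarith
        by_cases h : θ ∈ doubleConeAngles β α
        · rw [indicator_of_mem h, indicator_of_mem (hiff.1 h)]
        · rw [indicator_of_notMem h, indicator_of_notMem (mt hiff.2 h)]
    _ = ∫ θ in Ioc (β - π / 2) (β + π / 2), (Ioc (β - α) (β + α)).indicator f θ :=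
        integral_congr_ae (ae_restrict_of_ae (indicator_ae_eq_of_ae_eq_set Ioc_ae_eq_Icc.symm))
    _ = ∫ θ in Ioc (β - α) (β + α), f θ := by
        rw [setIntegral_indicator measurableSet_Ioc,
          inter_eq_right.2 (Ioc_subset_Ioc (by linarith) (by linarith))]

lemma setIntegral_indicator_doubleConeAngles {β α : ℝ} (hα0 : 0 ≤ α) (hα : α ≤ π / 2)
    {f : ℝ → ℝ} (hf : Continuous f) (hper : Function.Periodic f π) :
    ∫ θ in Ioo (-π) π, (doubleConeAngles β α).indicator f θ =
      2 * ∫ θ in (β - α)..(β + α), f θ := by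
  have hg_per : Function.Periodic ((doubleConeAngles β α).indicator f) π := fun θ => by
    by_cases h : θ ∈ doubleConeAngles β α
    · rw [indicator_of_mem h, indicator_of_mem (add_pi_mem_doubleConeAngles_iff.2 h), hper]
    · rw [indicator_of_notMem h, indicator_of_notMem (mt add_pi_mem_doubleConeAngles_iff.1 h)]
  have hg_int : ∀ a b, IntervalIntegrable ((doubleConeAngles β α).indicator f) volume a b :=
    fun a b => (hf.intervalIntegrable a b).mono_fun
      (hf.measurable.indicator (measurableSet_doubleConeAngles β α)).aestronglyMeasurable
      (ae_of_all _ fun θ => norm_indicator_le_norm_self f θ)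
  calc ∫ θ in Ioo (-π) π, (doubleConeAngles β α).indicator f θ
      = ∫ θ in (-π)..(-π + (2 : ℤ) • π), (doubleConeAngles β α).indicator f θ := by
        rw [show -π + (2 : ℤ) • π = π by norm_num; ring,
          intervalIntegral.integral_of_le (by linarith [pi_pos]), integral_Ioc_eq_integral_Ioo]
    _ = 2 * ∫ θ in (β - π / 2)..(β + π / 2), (doubleConeAngles β α).indicator f θ := by
        rw [hg_per.intervalIntegral_add_zsmul_eq 2 _ hg_int,
          hg_per.intervalIntegral_add_eq (-π) (β - π / 2), show β - π / 2 + π = β + π / 2 by ring]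
        norm_num
    _ = 2 * ∫ θ in (β - α)..(β + α), f θ := by
        rw [intervalIntegral.integral_of_le (by linarith [pi_pos]),
          intervalIntegral.integral_of_le (by linarith),
          setIntegral_indicator_doubleConeAngles_window hα]

lemma continuous_abs_inner_u_rpow (x : EuclideanSpace ℝ (Fin 2)) {a : ℝ} (ha : 0 ≤ a) :
    Continuous fun θ => |⟪x, u θ⟫| ^ a := by
  simp_rw [inner_u]
  exact (by fun_prop : Continuous _).rpow_const fun _ => Or.inr ha

lemma periodic_abs_inner_u_rpow (x : EuclideanSpace ℝ (Fin 2)) (a : ℝ) :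
    Function.Periodic (fun θ => |⟪x, u θ⟫| ^ a) π := fun θ => by
  simp only [u_add_pi, inner_neg_right, abs_neg]

lemma lintegral_radial_one_sub_cos_inner {a : ℝ} (ha0 : 0 < a) (ha2 : a < 2)
    (x : EuclideanSpace ℝ (Fin 2)) (θ : ℝ) :
    ∫⁻ r in Ioi 0,
        ENNReal.ofReal r * ENNReal.ofReal ((1 - cos ⟪x, r • u θ⟫) * ‖r • u θ‖ ^ (-a - 2)) =
      ENNReal.ofReal (radialConst a * |⟪x, u θ⟫| ^ a) := by
  rw [← lintegral_one_sub_cos_mul_mul_rpow ha0 ha2]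
  refine setLIntegral_congr_fun measurableSet_Ioi fun r (hr : 0 < r) => ?_
  rw [← ENNReal.ofReal_mul hr.le, inner_smul_right, norm_smul, norm_u, mul_one,
    norm_of_nonneg hr.le, show -a - 1 = -a - 2 + 1 by ring, rpow_add_one hr.ne', mul_comm r]
  ring_nf

lemma setLIntegral_doubleCone_one_sub_cos_inner {a : ℝ} (ha0 : 0 < a) (ha2 : a < 2) (β α : ℝ)
    (x : EuclideanSpace ℝ (Fin 2)) :
    ∫⁻ ξ in doubleCone β α, ENNReal.ofReal ((1 - cos ⟪x, ξ⟫) * ‖ξ‖ ^ (-a - 2)) =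
      ∫⁻ θ in Ioo (-π) π, ENNReal.ofReal
        ((doubleConeAngles β α).indicator (fun θ => radialConst a * |⟪x, u θ⟫| ^ a) θ) := by
  rw [setLIntegral_doubleCone β α (by fun_prop)]
  simp_rw [lintegral_radial_one_sub_cos_inner ha0 ha2]
  exact lintegral_congr fun θ => congr_fun (indicator_comp_of_zero ENNReal.ofReal_zero) θ

/-- Polar-coordinate variogram formula for the elementary field: for
`H ∈ (0,1)`, `α ∈ (0, π/2]`, `β ∈ ℝ` and `x ∈ ℝ²`,
`∫_{C(β,α)} (1 − cos(x·ξ)) ‖ξ‖^(−2H−2) dξ = γ(H) ∫_{β−α}^{β+α} |x·u(θ)|^(2H) dθ`. -/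
theorem elementary_field_variogram_polar (H : ℝ) (hH : H ∈ Set.Ioo (0 : ℝ) 1)
    (α : ℝ) (hα : α ∈ Set.Ioc (0 : ℝ) (π / 2)) (β : ℝ)
    (x : EuclideanSpace ℝ (Fin 2)) :
    ∫ ξ in doubleCone β α, (1 - Real.cos ⟪x, ξ⟫) * ‖ξ‖ ^ (-2 * H - 2) =
      gammaH H * ∫ θ in (β - α)..(β + α), |⟪x, u θ⟫| ^ (2 * H) := by
  have ha0 : 0 < 2 * H := by linarith [hH.1]
  have ha2 : 2 * H < 2 := by linarith [hH.2]
  set g := fun θ => radialConst (2 * H) * |⟪x, u θ⟫| ^ (2 * H)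
  have hg : Continuous g := continuous_const.mul (continuous_abs_inner_u_rpow x ha0.le)
  have hg_per : Function.Periodic g π := fun θ =>
    congrArg (radialConst (2 * H) * ·) (periodic_abs_inner_u_rpow x _ θ)
  have hg_ind : 0 ≤ (doubleConeAngles β α).indicator g := indicator_nonneg fun θ _ =>
    mul_nonneg (radialConst_nonneg ha0 ha2) (rpow_nonneg (abs_nonneg _) _)
  have hg_meas : Measurable ((doubleConeAngles β α).indicator g) :=
    hg.measurable.indicator (measurableSet_doubleConeAngles β α)
  calc ∫ ξ in doubleCone β α, (1 - cos ⟪x, ξ⟫) * ‖ξ‖ ^ (-2 * H - 2)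
      = (∫⁻ ξ in doubleCone β α,
          ENNReal.ofReal ((1 - cos ⟪x, ξ⟫) * ‖ξ‖ ^ (-(2 * H) - 2))).toReal := by
        rw [neg_mul]
        exact integral_eq_lintegral_of_nonneg_ae (ae_of_all _ fun ξ =>
          mul_nonneg (sub_nonneg.2 (cos_le_one _)) (rpow_nonneg (norm_nonneg _) _)) (by fun_prop)
    _ = (∫⁻ θ in Ioo (-π) π, ENNReal.ofReal ((doubleConeAngles β α).indicator g θ)).toReal := by
        rw [setLIntegral_doubleCone_one_sub_cos_inner ha0 ha2]
    _ = ∫ θ in Ioo (-π) π, (doubleConeAngles β α).indicator g θ :=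
        (integral_eq_lintegral_of_nonneg_ae (ae_of_all _ hg_ind) hg_meas.aestronglyMeasurable).symm
    _ = gammaH H * ∫ θ in (β - α)..(β + α), |⟪x, u θ⟫| ^ (2 * H) := by
        rw [setIntegral_indicator_doubleConeAngles hα.1.le hα.2 hg hg_per,
          intervalIntegral.integral_const_mul, ← mul_assoc, two_mul_radialConst_two_mul hH.1.ne']

end
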